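/- Let m ≥ 2 be an integer and let u : ℝ^m ∖ {0} → ℝ^{m²} be the Misawa–Nakauchi map with components u_{ij}(x) = (1/√(m(m−1)))(−δ_{ij} + m x_i x_j / r²). Then for every x ∈ ℝ^m ∖ {0} and all indices i,j, the componentwise Euclidean bi-Laplacian satisfies Δ²u_{ij}(x) = (8m(m−2) / r(x)⁴) u_{ij}(x). -/

import Mathlib

noncomputable section

/-- Partial derivative of `f` in the `k`-th coordinate direction. -/
def pd {m : ℕ} (k : Fin m) (f : EuclideanSpace ℝ (Fin m) → ℝ)
    (x : EuclideanSpace ℝ (Fin m)) : ℝ :=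
  fderiv ℝ f x (EuclideanSpace.single k 1)

/-- Euclidean Laplacian `Δf = Σ_k ∂²f/∂x_k²`. -/
def lap {m : ℕ} (f : EuclideanSpace ℝ (Fin m) → ℝ)
    (x : EuclideanSpace ℝ (Fin m)) : ℝ :=
  ∑ k : Fin m, pd k (pd k f) x

/-- The Misawa–Nakauchi map `u_{ij}(x) = (1/√(m(m−1)))(−δ_{ij} + m xᵢxⱼ/r²)`. -/
def uMN (m : ℕ) (i j : Fin m) (x : EuclideanSpace ℝ (Fin m)) : ℝ :=
  (1 / Real.sqrt ((m : ℝ) * ((m : ℝ) - 1))) *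
    (-(if i = j then (1 : ℝ) else 0) + (m : ℝ) * x i * x j / ‖x‖ ^ 2)

/-! The map is a radial multiple of a harmonic quadratic: with
`h_ij = x_i x_j - δ_ij r² / m` one has `u_ij = (m / √(m(m-1))) r⁻² h_ij`.
For `g` harmonic and homogeneous of degree `d` (Euler: `∑ x_k ∂_k g = d g`), the product rule for
`Δ` gives `Δ(r^{2q} g) = 2q (m + 2q + 2d - 2) r^{2q-2} g`. With `d = 2`, applying this at `q = -1`
and then at `q = -2` produces the factors `-2m` and `-4(m-2)`. -/

open Filter Topology

section PartialDerivatives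

variable {m : ℕ} {f g : EuclideanSpace ℝ (Fin m) → ℝ} {x : EuclideanSpace ℝ (Fin m)} (k : Fin m)

theorem HasFDerivAt.pd_eq {f' : EuclideanSpace ℝ (Fin m) →L[ℝ] ℝ} (hf : HasFDerivAt f f' x) :
    pd k f x = f' (EuclideanSpace.single k 1) := by
  rw [pd, hf.fderiv]

theorem pd_congr_nhds (h : f =ᶠ[𝓝 x] g) : pd k f x = pd k g x := by
  rw [pd, pd, h.fderiv_eq]

theorem pd_add (hf : DifferentiableAt ℝ f x) (hg : DifferentiableAt ℝ g x) :
    pd k (fun y => f y + g y) x = pd k f x + pd k g x :=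
  (hf.hasFDerivAt.add hg.hasFDerivAt).pd_eq k

theorem pd_sub (hf : DifferentiableAt ℝ f x) (hg : DifferentiableAt ℝ g x) :
    pd k (fun y => f y - g y) x = pd k f x - pd k g x :=
  (hf.hasFDerivAt.sub hg.hasFDerivAt).pd_eq k

theorem pd_mul (hf : DifferentiableAt ℝ f x) (hg : DifferentiableAt ℝ g x) :
    pd k (fun y => f y * g y) x = pd k f x * g x + f x * pd k g x := by
  have h : HasFDerivAt (fun y => f y * g y) _ x := hf.hasFDerivAt.mul hg.hasFDerivAt
  rw [h.pd_eq k, pd, pd]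
  simp only [_root_.add_apply, _root_.smul_apply, smul_eq_mul]
  ring

theorem pd_const_mul (c : ℝ) : pd k (fun y => c * f y) x = c * pd k f x := by
  simp only [pd, ← smul_eq_mul, ← Pi.smul_def, fderiv_const_smul_field,
    _root_.smul_apply, Pi.smul_apply]

theorem hasFDerivAt_coord (l : Fin m) :
    HasFDerivAt (fun y : EuclideanSpace ℝ (Fin m) => y l)
      (EuclideanSpace.proj l : EuclideanSpace ℝ (Fin m) →L[ℝ] ℝ) x :=
  (EuclideanSpace.proj l : EuclideanSpace ℝ (Fin m) →L[ℝ] ℝ).hasFDerivAt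

theorem pd_coord (l : Fin m) : pd k (fun y : EuclideanSpace ℝ (Fin m) => y l) x =
    if l = k then 1 else 0 := by
  rw [(hasFDerivAt_coord l).pd_eq k]
  simp

theorem pd_normSq : pd k (fun y => ‖y‖ ^ 2) x = 2 * x k := by
  rw [(hasStrictFDerivAt_norm_sq x).hasFDerivAt.pd_eq k]
  simp [EuclideanSpace.inner_single_right]

theorem pd_normSq_rpow (q : ℝ) (hx : x ≠ 0) :
    pd k (fun y => (‖y‖ ^ 2) ^ q) x = 2 * q * (‖x‖ ^ 2) ^ (q - 1) * x k := by
  have h : HasFDerivAt (fun y => (‖y‖ ^ 2) ^ q) _ x :=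
    (hasStrictFDerivAt_norm_sq x).hasFDerivAt.rpow_const (p := q) (Or.inl (by positivity))
  rw [h.pd_eq k]
  simp [EuclideanSpace.inner_single_right]
  ring

theorem ContDiffAt.pd {n : WithTop ℕ∞} (hf : ContDiffAt ℝ (n + 1) f x) :
    ContDiffAt ℝ n (pd k f) x :=
  hf.fderiv_right_succ.clm_apply contDiffAt_const

end PartialDerivatives

section Laplacian

variable {m : ℕ} {f g : EuclideanSpace ℝ (Fin m) → ℝ} {x : EuclideanSpace ℝ (Fin m)}

theorem pd_pd_mul (k : Fin m) (hf : ContDiffAt ℝ 2 f x) (hg : ContDiffAt ℝ 2 g x) :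
    pd k (pd k (fun y => f y * g y)) x
      = pd k (pd k f) x * g x + 2 * (pd k f x * pd k g x) + f x * pd k (pd k g) x := by
  have hf' : ∀ᶠ y in 𝓝 x, DifferentiableAt ℝ f y :=
    (hf.eventually (by simp)).mono fun y hy => hy.differentiableAt (by simp)
  have hg' : ∀ᶠ y in 𝓝 x, DifferentiableAt ℝ g y :=
    (hg.eventually (by simp)).mono fun y hy => hy.differentiableAt (by simp)
  have hfk : DifferentiableAt ℝ (pd k f) x := (hf.pd (n := 1) k).differentiableAt one_ne_zero
  have hgk : DifferentiableAt ℝ (pd k g) x := (hg.pd (n := 1) k).differentiableAt one_ne_zero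
  have hfg : pd k (fun y => f y * g y) =ᶠ[𝓝 x] fun y => pd k f y * g y + f y * pd k g y :=
    (hf'.and hg').mono fun y hy => pd_mul k hy.1 hy.2
  rw [pd_congr_nhds k hfg, pd_add k (hfk.fun_mul hg'.self_of_nhds) (hf'.self_of_nhds.fun_mul hgk),
    pd_mul k hfk hg'.self_of_nhds, pd_mul k hf'.self_of_nhds hgk]
  ring

theorem lap_mul (hf : ContDiffAt ℝ 2 f x) (hg : ContDiffAt ℝ 2 g x) :
    lap (fun y => f y * g y) x
      = lap f x * g x + 2 * ∑ k, pd k f x * pd k g x + f x * lap g x := by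
  simp only [lap, pd_pd_mul _ hf hg, Finset.sum_add_distrib, Finset.sum_mul, Finset.mul_sum]

theorem lap_const_mul (c : ℝ) : lap (fun y => c * f y) x = c * lap f x := by
  have h : ∀ k, pd k (fun y => c * f y) = fun y => c * pd k f y :=
    fun k => funext fun _ => pd_const_mul k c
  simp only [lap, h, pd_const_mul, Finset.mul_sum]

theorem lap_congr_nhds (h : f =ᶠ[𝓝 x] g) : lap f x = lap g x :=
  Finset.sum_congr rfl fun k _ =>
    pd_congr_nhds k (h.eventuallyEq_nhds.mono fun _ hy => pd_congr_nhds k hy)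

theorem contDiffAt_normSq_rpow (q : ℝ) (hx : x ≠ 0) :
    ContDiffAt ℝ 2 (fun y => (‖y‖ ^ 2) ^ q) x :=
  (contDiff_norm_sq ℝ).contDiffAt.rpow_const_of_ne (by positivity)

theorem lap_normSq_rpow (q : ℝ) (hx : x ≠ 0) :
    lap (fun y => (‖y‖ ^ 2) ^ q) x = 2 * q * (m + 2 * q - 2) * (‖x‖ ^ 2) ^ (q - 1) := by
  have hs : ‖x‖ ^ 2 ≠ 0 := by positivity
  have hpd2 : ∀ k, pd k (pd k (fun y => (‖y‖ ^ 2) ^ q)) x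
      = 2 * q * ((‖x‖ ^ 2) ^ (q - 1) + 2 * (q - 1) * (‖x‖ ^ 2) ^ (q - 1 - 1) * x k ^ 2) := by
    intro k
    have hpd : pd k (fun y => (‖y‖ ^ 2) ^ q) =ᶠ[𝓝 x]
        fun y => 2 * q * ((‖y‖ ^ 2) ^ (q - 1) * y k) :=
      (eventually_ne_nhds hx).mono fun y hy => by rw [pd_normSq_rpow k q hy]; ring
    rw [pd_congr_nhds k hpd, pd_const_mul, pd_mul k ((contDiffAt_normSq_rpow _ hx).differentiableAt
      two_ne_zero) (by fun_prop), pd_normSq_rpow k _ hx, pd_coord, if_pos rfl]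
    ring
  simp only [lap, hpd2, ← Finset.mul_sum, Finset.sum_add_distrib, Finset.sum_const,
    Finset.card_univ, Fintype.card_fin, nsmul_eq_mul, ← EuclideanSpace.real_norm_sq_eq,
    Real.rpow_sub_one hs]
  field_simp
  ring

theorem lap_normSq_rpow_mul (q d : ℝ) (hx : x ≠ 0) (hg : ContDiffAt ℝ 2 g x)
    (hg_euler : ∑ k, x k * pd k g x = d * g x) (hg_harm : lap g x = 0) :
    lap (fun y => (‖y‖ ^ 2) ^ q * g y) x
      = 2 * q * (m + 2 * q + 2 * d - 2) * (‖x‖ ^ 2) ^ (q - 1) * g x := by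
  have hcross : ∑ k, pd k (fun y => (‖y‖ ^ 2) ^ q) x * pd k g x
      = 2 * q * (‖x‖ ^ 2) ^ (q - 1) * (d * g x) := by
    simp only [pd_normSq_rpow _ q hx, ← hg_euler, Finset.mul_sum, mul_assoc]
  rw [lap_mul (contDiffAt_normSq_rpow q hx) hg, lap_normSq_rpow q hx, hcross, hg_harm]
  ring

end Laplacian

section TracelessQuadratic

variable {m : ℕ} (i j : Fin m)

def tracelessQuadratic (y : EuclideanSpace ℝ (Fin m)) : ℝ :=
  y i * y j - (if i = j then (m : ℝ)⁻¹ else 0) * ‖y‖ ^ 2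

theorem contDiff_tracelessQuadratic : ContDiff ℝ 2 (tracelessQuadratic i j) :=
  ((EuclideanSpace.proj i).contDiff.mul (EuclideanSpace.proj j).contDiff).sub
    (contDiff_const.mul (contDiff_norm_sq ℝ))

theorem pd_tracelessQuadratic (k : Fin m) (y : EuclideanSpace ℝ (Fin m)) :
    pd k (tracelessQuadratic i j) y
      = (if i = k then 1 else 0) * y j + (if j = k then 1 else 0) * y i
        - 2 * (if i = j then (m : ℝ)⁻¹ else 0) * y k := by
  unfold tracelessQuadratic
  rw [pd_sub k (by fun_prop) ((hasStrictFDerivAt_norm_sq y).differentiableAt.const_mul _),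
    pd_mul k (by fun_prop) (by fun_prop), pd_const_mul, pd_coord, pd_coord, pd_normSq]
  ring

theorem sum_coord_mul_pd_tracelessQuadratic (y : EuclideanSpace ℝ (Fin m)) :
    ∑ k, y k * pd k (tracelessQuadratic i j) y = 2 * tracelessQuadratic i j y := by
  calc ∑ k, y k * pd k (tracelessQuadratic i j) y
      = ∑ k, ((if i = k then y i * y j else 0) + (if j = k then y j * y i else 0)
          - 2 * (if i = j then (m : ℝ)⁻¹ else 0) * y k ^ 2) := by
        refine Finset.sum_congr rfl fun k _ => ?_
        rw [pd_tracelessQuadratic]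
        split_ifs <;> subst_vars <;> ring
    _ = 2 * tracelessQuadratic i j y := by
        simp only [Finset.sum_sub_distrib, Finset.sum_add_distrib, Finset.sum_ite_eq,
          Finset.mem_univ, if_true, ← Finset.mul_sum, ← EuclideanSpace.real_norm_sq_eq,
          tracelessQuadratic]
        ring

theorem lap_tracelessQuadratic (y : EuclideanSpace ℝ (Fin m)) :
    lap (tracelessQuadratic i j) y = 0 := by
  have hpd2 : ∀ k, pd k (pd k (tracelessQuadratic i j)) y
      = 2 * (if i = k then 1 else 0) * (if j = k then 1 else 0)
        - 2 * (if i = j then (m : ℝ)⁻¹ else 0) := by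
    intro k
    rw [funext (pd_tracelessQuadratic i j k), pd_sub k (by fun_prop) (by fun_prop),
      pd_add k (by fun_prop) (by fun_prop), pd_const_mul, pd_const_mul, pd_const_mul,
      pd_coord, pd_coord, pd_coord, if_pos rfl]
    split_ifs <;> subst_vars <;> ring
  have hm : (m : ℝ) ≠ 0 := Nat.cast_ne_zero.mpr (Fin.pos i).ne'
  simp only [lap, hpd2, Finset.sum_sub_distrib, Finset.sum_const, Finset.card_univ,
    Fintype.card_fin, nsmul_eq_mul, mul_ite, mul_one, mul_zero]
  by_cases hij : i = j
  · subst hij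
    simp only [Finset.sum_ite_eq, Finset.mem_univ, ↓reduceIte]
    field_simp
    ring
  · simp [hij]

end TracelessQuadratic

theorem lap_normSq_rpow_mul_tracelessQuadratic {m : ℕ} (i j : Fin m) (q : ℝ)
    {x : EuclideanSpace ℝ (Fin m)} (hx : x ≠ 0) :
    lap (fun y => (‖y‖ ^ 2) ^ q * tracelessQuadratic i j y) x
      = 2 * q * (m + 2 * q + 2) * ((‖x‖ ^ 2) ^ (q - 1) * tracelessQuadratic i j x) := by
  rw [lap_normSq_rpow_mul q 2 hx (contDiff_tracelessQuadratic i j).contDiffAt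
    (sum_coord_mul_pd_tracelessQuadratic i j x) (lap_tracelessQuadratic i j x)]
  ring

theorem uMN_eq_normSq_rpow_mul_tracelessQuadratic {m : ℕ} (i j : Fin m)
    {y : EuclideanSpace ℝ (Fin m)} (hy : y ≠ 0) :
    uMN m i j y = 1 / Real.sqrt (m * (m - 1)) * m
      * ((‖y‖ ^ 2) ^ (-1 : ℝ) * tracelessQuadratic i j y) := by
  have hm : (m : ℝ) ≠ 0 := Nat.cast_ne_zero.mpr (Fin.pos i).ne'
  rw [uMN, tracelessQuadratic, Real.rpow_neg_one]
  split_ifs <;> field_simp <;> ring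

theorem stmt2_general (m : ℕ) (x : EuclideanSpace ℝ (Fin m)) (hx : x ≠ 0)
    (i j : Fin m) :
    lap (lap (uMN m i j)) x
      = (8 * (m : ℝ) * ((m : ℝ) - 2) / ‖x‖ ^ 4) * uMN m i j x := by
  set c := 1 / Real.sqrt (m * (m - 1)) * (m : ℝ)
  have hlap : lap (uMN m i j) =ᶠ[𝓝 x]
      fun y => c * (-2 * m) * ((‖y‖ ^ 2) ^ (-2 : ℝ) * tracelessQuadratic i j y) := by
    filter_upwards [eventually_ne_nhds hx] with y hy
    have hu : uMN m i j =ᶠ[𝓝 y]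
        fun z => c * ((‖z‖ ^ 2) ^ (-1 : ℝ) * tracelessQuadratic i j z) :=
      (eventually_ne_nhds hy).mono fun z hz => uMN_eq_normSq_rpow_mul_tracelessQuadratic i j hz
    rw [lap_congr_nhds hu, lap_const_mul, lap_normSq_rpow_mul_tracelessQuadratic i j _ hy]
    norm_num
    ring
  rw [lap_congr_nhds hlap, lap_const_mul, lap_normSq_rpow_mul_tracelessQuadratic i j _ hx,
    uMN_eq_normSq_rpow_mul_tracelessQuadratic i j hx]
  have hpow : (‖x‖ ^ 2) ^ ((-2 : ℝ) - 1) = (‖x‖ ^ 2) ^ (-1 : ℝ) / ‖x‖ ^ 4 := by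
    rw [show (-2 : ℝ) - 1 = -1 - 2 by norm_num, Real.rpow_sub (by positivity), Real.rpow_two]
    ring
  rw [hpow]
  ring

theorem stmt2 (m : ℕ) (hm : 2 ≤ m) (x : EuclideanSpace ℝ (Fin m)) (hx : x ≠ 0)
    (i j : Fin m) :
    lap (lap (uMN m i j)) x
      = (8 * (m : ℝ) * ((m : ℝ) - 2) / ‖x‖ ^ 4) * uMN m i j x :=
  stmt2_general m x hx i j
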